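/- Let α > 1, μ > 0 and x ∈ ℝ. If (1+α)/2 · (c - x)² ≥ (1/μ)(c - 1/(2μ)) for all c ∈ ℝ, then x ≤ (1/(2μ)) · α/(1+α). -/

import Mathlib

/-- Discriminant argument for the pinning model: if `α > 1`, `μ > 0` and `x ∈ ℝ` satisfy
`((1+α)/2)(c - x)² ≥ (1/μ)(c - 1/(2μ))` for all `c ∈ ℝ`, then
`x ≤ (1/(2μ)) · α/(1+α)`. -/
theorem discriminant_bound_pinning (α μ x : ℝ) (hα : 1 < α) (hμ : 0 < μ)
    (h : ∀ c : ℝ, (1 / μ) * (c - 1 / (2 * μ)) ≤ ((1 + α) / 2) * (c - x) ^ 2) :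
    x ≤ (1 / (2 * μ)) * (α / (1 + α)) := by
  have hA : (0:ℝ) < 1 + α := by linarith
  have hkey := h (x + 1 / ((1 + α) * μ))
  have h1 : ((1 + α) * μ) ≠ 0 := by positivity
  have hμ' : μ ≠ 0 := ne_of_gt hμ
  field_simp at hkey ⊢
  nlinarith [mul_pos (mul_pos hA hA) (mul_pos hμ (mul_pos hμ hμ)), mul_pos hA hμ, mul_pos hμ hμ]
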